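/- Let φ, ψ be structural sets in ℝ_{0,m} and f: Ω → ℝ_{0,m} C²-smooth. Then φ∂[Ψ₊^{φ,ψ}(f)]ψ∂ = Ψ₋^{φ,ψ}(Δf) and φ∂[Ψ₋^{φ,ψ}(f)]ψ∂ = Ψ₊^{φ,ψ}(Δf). -/

import Mathlib

/-!
With `sᵢ(A) = (-1)^#{a ∈ A | a ≤ i}` one has `φⁱ φ_A = sᵢ(A) φ_{A ∆ {i}}` and
`ψ̂_A ψʲ = sⱼ(A) ψ̂_{A ∆ {j}}`. On the diagonal `i = j` the signs square to `1` and
`A ↦ A ∆ {i}` exchanges sets of even and odd cardinality, so `φⁱ Ψ_±(a) ψⁱ = Ψ_∓(a)`.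
Off the diagonal, pairing `A` with `A ∆ {i, j}` (which flips the sign `sᵢ sⱼ`) gives
`φⁱ Ψ_±(a) ψʲ = -φʲ Ψ_±(a) ψⁱ`, so by the symmetry of the Hessian the off-diagonal terms of
`φ∂[Ψ_±(f)]ψ∂` cancel in pairs and what is left is `Σᵢ Ψ_∓(∂²f/∂xᵢ²) = Ψ_∓(Δf)`.
-/

open CliffordAlgebra

noncomputable section

/-- The quadratic form of `ℝ_{0,m}`: negative definite on `ℝ^m`. -/
abbrev Qf (m : ℕ) : QuadraticForm ℝ (Fin m → ℝ) :=
  QuadraticMap.weightedSumSquares ℝ (fun _ : Fin m => (-1 : ℝ))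

/-- The real Clifford algebra `ℝ_{0,m}`. -/
abbrev Cl (m : ℕ) := CliffordAlgebra (Qf m)

/-- A structural set: an orthonormal basis `ψ¹,…,ψᵐ` of `ℝᵐ`. -/
def IsStructuralSet {m : ℕ} (ψ : Fin m → (Fin m → ℝ)) : Prop :=
  ∀ i j, (∑ t, ψ i t * ψ j t) = if i = j then (1 : ℝ) else 0

/-- The ordered product `ψ_A = ψ^{j₁} ⋯ ψ^{j_k}` for `A = {j₁ < ⋯ < j_k}`. -/
def prodS {m : ℕ} (ψ : Fin m → (Fin m → ℝ)) (A : Finset (Fin m)) : Cl m :=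
  ((A.sort (· ≤ ·)).map (fun i => ι (Qf m) (ψ i))).prod

/-- The operator `Ψ_k^{φ,ψ}(a) = Σ_{|A|=k} φ_A a ψ̂_A`. -/
def PsiK {m : ℕ} (φ ψ : Fin m → (Fin m → ℝ)) (k : ℕ) (a : Cl m) : Cl m :=
  ∑ A ∈ Finset.univ.filter (fun A : Finset (Fin m) => A.card = k),
    prodS φ A * a * reverse (prodS ψ A)

/-- `Ψ₊ = Σ_{k even} Ψ_k`. -/
def PsiPlus {m : ℕ} (φ ψ : Fin m → (Fin m → ℝ)) (a : Cl m) : Cl m :=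
  ∑ k ∈ (Finset.range (m + 1)).filter (fun k => Even k), PsiK φ ψ k a

/-- `Ψ₋ = Σ_{k odd} Ψ_k`. -/
def PsiMinus {m : ℕ} (φ ψ : Fin m → (Fin m → ℝ)) (a : Cl m) : Cl m :=
  ∑ k ∈ (Finset.range (m + 1)).filter (fun k => Odd k), PsiK φ ψ k a

/-- `Ψ₁^{φ,ψ}(a) = Σⱼ φʲ a ψʲ`. -/
def Psi1 {m : ℕ} (φ ψ : Fin m → (Fin m → ℝ)) (a : Cl m) : Cl m :=
  ∑ j, ι (Qf m) (φ j) * a * ι (Qf m) (ψ j)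

/-- The standard basis of `ℝᵐ`. -/
def stdB {m : ℕ} (i : Fin m) : Fin m → ℝ := Pi.single i 1

/-- The basis multivector `e_A`. -/
def eA {m : ℕ} (A : Finset (Fin m)) : Cl m := prodS stdB A

/-- The element with coefficients `c` in the multivector basis. -/
def toCl {m : ℕ} (c : Finset (Fin m) → ℝ) : Cl m := ∑ A, c A • eA A

/-- The space `ℝ_{0,m}^{(k)}` of `k`-grade multivectors. -/
def gradeK (m k : ℕ) : Submodule ℝ (Cl m) :=
  Submodule.span ℝ {x | ∃ A : Finset (Fin m), A.card = k ∧ x = eA A}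

/-- Coefficient functions of `ℝ_{0,m}`-valued maps. -/
abbrev Coef (m : ℕ) := Finset (Fin m) → ℝ

/-- The coefficients of the even part `f₊`. -/
def cEven {m : ℕ} (c : Coef m) : Coef m := fun A => if Even A.card then c A else 0

/-- The coefficients of the odd part `f₋`. -/
def cOdd {m : ℕ} (c : Coef m) : Coef m := fun A => if Odd A.card then c A else 0

/-- The even part of a Clifford number. -/
def evenPart {m : ℕ} (a : Cl m) : Cl m :=
  (DirectSum.decompose (evenOdd (Qf m)) a 0 : evenOdd (Qf m) 0)

/-- The odd part of a Clifford number. -/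
def oddPart {m : ℕ} (a : Cl m) : Cl m :=
  (DirectSum.decompose (evenOdd (Qf m)) a 1 : evenOdd (Qf m) 1)

/-- Partial derivative `∂F/∂xᵢ` of a coefficient function. -/
def pd {m : ℕ} (i : Fin m) (F : (Fin m → ℝ) → Coef m) : (Fin m → ℝ) → Coef m :=
  fun x => fderiv ℝ F x (Pi.single i 1)

/-- The sandwich operator `φ∂[f]ψ∂ = Σᵢⱼ φⁱ (∂²f/∂xᵢ∂xⱼ) ψʲ` for `f = Σ_A F_A e_A`. -/
def sandwichD {m : ℕ} (φ ψ : Fin m → (Fin m → ℝ)) (F : (Fin m → ℝ) → Coef m)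
    (x : Fin m → ℝ) : Cl m :=
  ∑ i, ∑ j, ι (Qf m) (φ i) * toCl (pd i (pd j F) x) * ι (Qf m) (ψ j)

/-- The operator `φ∂[ψ∂[f]] = Σᵢⱼ φⁱ ψʲ ∂²f/∂xᵢ∂xⱼ`. -/
def ddD {m : ℕ} (φ ψ : Fin m → (Fin m → ℝ)) (F : (Fin m → ℝ) → Coef m)
    (x : Fin m → ℝ) : Cl m :=
  ∑ i, ∑ j, ι (Qf m) (φ i) * (ι (Qf m) (ψ j) * toCl (pd i (pd j F) x))

/-- The componentwise Laplacian `Δf = Σᵢ ∂²f/∂xᵢ²`. -/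
def lapD {m : ℕ} (F : (Fin m → ℝ) → Coef m) (x : Fin m → ℝ) : Cl m :=
  ∑ i, toCl (pd i (pd i F) x)

open scoped symmDiff Finset

namespace Finset

variable {α : Type*} [DecidableEq α]

theorem card_symmDiff_add_two_mul_card_inter (s t : Finset α) :
    #(s ∆ t) + 2 * #(s ∩ t) = #s + #t := by
  rw [symmDiff_def, sup_eq_union, card_union_of_disjoint disjoint_sdiff_sdiff]
  have hs := card_sdiff_add_card_inter s t
  have ht := card_sdiff_add_card_inter t s
  rw [inter_comm] at ht
  omega

theorem even_card_symmDiff_iff (s t : Finset α) :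
    Even #(s ∆ t) ↔ (Even #s ↔ Even #t) := by
  have := card_symmDiff_add_two_mul_card_inter s t
  simp only [Nat.even_iff]
  omega

theorem neg_one_pow_card_symmDiff {R : Type*} [Ring R] (s t : Finset α) :
    (-1 : R) ^ #(s ∆ t) = (-1) ^ #s * (-1) ^ #t := by
  rw [← pow_add, neg_one_pow_eq_pow_mod_two, neg_one_pow_eq_pow_mod_two (#s + #t)]
  have := card_symmDiff_add_two_mul_card_inter s t
  congr 1
  omega

theorem filter_symmDiff (p : α → Prop) [DecidablePred p] (s t : Finset α) :
    (s ∆ t).filter p = s.filter p ∆ t.filter p := by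
  ext x
  simp only [mem_filter, mem_symmDiff]
  tauto

theorem pair_symmDiff_singleton_right {i j : α} (h : i ≠ j) :
    ({i, j} : Finset α) ∆ {j} = {i} := by
  ext x
  simp only [mem_symmDiff, mem_insert, mem_singleton]
  grind

theorem sum_sum_eq_sum_diag_of_antisymm {M : Type*} [AddCommMonoid M] (s : Finset α)
    (f : α → α → M) (hf : ∀ i ∈ s, ∀ j ∈ s, i ≠ j → f i j + f j i = 0) :
    ∑ i ∈ s, ∑ j ∈ s, f i j = ∑ i ∈ s, f i i := by
  rw [← sum_product' (f := f), ← diag_union_offDiag, sum_union (disjoint_diag_offDiag s),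
    sum_diag]
  convert add_zero _
  refine sum_involution (fun p _ => p.swap) (fun p hp => ?_) (fun p hp _ => ?_)
    (fun p hp => ?_) (fun p _ => rfl)
  · rw [mem_offDiag] at hp
    exact hf _ hp.1 _ hp.2.1 hp.2.2
  · exact fun h => (mem_offDiag.1 hp).2.2 (congrArg Prod.fst h).symm
  · rw [mem_offDiag] at hp ⊢
    exact ⟨hp.2.1, hp.1, hp.2.2.symm⟩

end Finset

section Clifford

variable {m : ℕ} {φ ψ : Fin m → Fin m → ℝ}

theorem Qf_apply (v : Fin m → ℝ) : Qf m v = -∑ t, v t * v t := by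
  simp [QuadraticMap.weightedSumSquares_apply]

variable (φ) in
theorem prodS_insert_of_lt {a : Fin m} {A : Finset (Fin m)}
    (h : ∀ b ∈ A, a < b) :
    prodS φ (insert a A) = ι (Qf m) (φ a) * prodS φ A := by
  have ha : a ∉ A := fun ha => lt_irrefl a (h a ha)
  simp [prodS, Finset.sort_insert (· ≤ ·) (fun b hb => (h b hb).le) ha]

/-- `φⁱ` anticommutes past the factors of `φ_A` below `i`, and squares to `-1` against itself
when `i ∈ A`. -/
def mulSign (i : Fin m) (A : Finset (Fin m)) : ℝ := (-1) ^ #{a ∈ A | a ≤ i}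

theorem mulSign_mul_self (i : Fin m) (A : Finset (Fin m)) : mulSign i A * mulSign i A = 1 := by
  simp [mulSign, ← mul_pow]

theorem mulSign_symmDiff_pair {i j : Fin m} (h : i ≠ j) (A : Finset (Fin m)) :
    mulSign i (A ∆ {i, j}) * mulSign j (A ∆ {i, j}) = -(mulSign i A * mulSign j A) := by
  have hpair : (-1 : ℝ) ^ #{a ∈ ({i, j} : Finset (Fin m)) | a ≤ i} *
      (-1) ^ #{a ∈ ({i, j} : Finset (Fin m)) | a ≤ j} = -1 := by
    rcases h.lt_or_gt with h | h <;>
      simp [Finset.filter_insert, Finset.filter_singleton, h.le, h.not_ge, h.ne, h.ne', pow_succ]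
  simp only [mulSign, Finset.filter_symmDiff, Finset.neg_one_pow_card_symmDiff]
  linear_combination (-1 : ℝ) ^ #{a ∈ A | a ≤ i} * (-1) ^ #{a ∈ A | a ≤ j} * hpair

namespace IsStructuralSet

theorem ι_mul_ι_self (hφ : IsStructuralSet φ) (i : Fin m) :
    ι (Qf m) (φ i) * ι (Qf m) (φ i) = -1 := by
  rw [ι_sq_scalar, Qf_apply, hφ i i, if_pos rfl, map_neg, map_one]

theorem ι_mul_ι_comm_of_ne (hφ : IsStructuralSet φ) {i j : Fin m} (h : i ≠ j) :
    ι (Qf m) (φ i) * ι (Qf m) (φ j) = -(ι (Qf m) (φ j) * ι (Qf m) (φ i)) := by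
  have hpolar : QuadraticMap.polar (Qf m) (φ i) (φ j) = 0 := by
    simp only [QuadraticMap.polar, Qf_apply, Pi.add_apply, add_mul, mul_add,
      Finset.sum_add_distrib]
    rw [hφ i i, hφ j j, hφ i j, hφ j i, if_neg h, if_neg h.symm]
    ring
  have := ι_mul_ι_add_swap (Q := Qf m) (φ i) (φ j)
  rw [hpolar, map_zero] at this
  exact eq_neg_of_add_eq_zero_left this

theorem ι_mul_prodS (hφ : IsStructuralSet φ) (i : Fin m) (A : Finset (Fin m)) :
    ι (Qf m) (φ i) * prodS φ A = mulSign i A • prodS φ (A ∆ {i}) := by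
  induction A using Finset.induction_on_min with
  | empty => rw [← Finset.bot_eq_empty, bot_symmDiff]; simp [prodS, mulSign]
  | insert a s hlt ih =>
    have has : a ∉ s := fun ha => lt_irrefl a (hlt a ha)
    rw [prodS_insert_of_lt φ hlt]
    rcases lt_trichotomy i a with hia | rfl | hai
    · have hall : ∀ b ∈ insert a s, i < b := by
        simpa using ⟨hia, fun b hb => hia.trans (hlt b hb)⟩
      have hi : i ∉ insert a s := fun hi => lt_irrefl i (hall i hi)
      have hsign : mulSign i (insert a s) = 1 := by
        have : {b ∈ insert a s | b ≤ i} = ∅ :=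
          Finset.filter_eq_empty_iff.2 fun b hb => (hall b hb).not_ge
        simp [mulSign, this]
      have hset : insert a s ∆ {i} = insert i (insert a s) := by
        ext x; by_cases hx : x = i <;> simp [Finset.mem_symmDiff, hx, hi]
      rw [hsign, one_smul, hset, prodS_insert_of_lt φ hall, prodS_insert_of_lt φ hlt]
    · have hsign : mulSign i (insert i s) = -1 := by
        have : {b ∈ insert i s | b ≤ i} = {i} := by
          ext b
          simp only [Finset.mem_filter, Finset.mem_insert, Finset.mem_singleton]
          exact ⟨fun ⟨hb, hbi⟩ => hb.resolve_right fun hb => hbi.not_gt (hlt b hb),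
            fun hb => ⟨Or.inl hb, hb.le⟩⟩
        simp [mulSign, this]
      have hset : insert i s ∆ {i} = s := by
        ext x; by_cases hx : x = i <;> simp [Finset.mem_symmDiff, hx, has]
      rw [← mul_assoc, hφ.ι_mul_ι_self, hsign, hset, neg_one_mul, neg_one_smul]
    · have hsign : mulSign i (insert a s) = -mulSign i s := by
        simp [mulSign, Finset.filter_insert, hai.le, has, pow_succ]
      have hset : insert a s ∆ {i} = insert a (s ∆ {i}) := by
        ext x; by_cases hx : x = i <;> simp [Finset.mem_symmDiff, hx, hai.ne']
      have hlt' : ∀ b ∈ s ∆ {i}, a < b := by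
        intro b hb
        rcases Finset.mem_symmDiff.1 hb with ⟨hb, -⟩ | ⟨hb, -⟩
        · exact hlt b hb
        · exact Finset.mem_singleton.1 hb ▸ hai
      rw [← mul_assoc, hφ.ι_mul_ι_comm_of_ne hai.ne', neg_mul, mul_assoc, ih, mul_smul_comm,
        ← prodS_insert_of_lt φ hlt', hsign, hset, neg_smul]

theorem reverse_prodS_mul_ι (hψ : IsStructuralSet ψ) (j : Fin m) (A : Finset (Fin m)) :
    reverse (prodS ψ A) * ι (Qf m) (ψ j) = mulSign j A • reverse (prodS ψ (A ∆ {j})) := by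
  simpa only [reverse.map_mul, reverse_ι, map_smul] using
    congrArg reverse (hψ.ι_mul_prodS j A)

end IsStructuralSet

theorem ι_mul_prodS_mul_reverse_mul_ι (hφ : IsStructuralSet φ) (hψ : IsStructuralSet ψ)
    (i j : Fin m) (A : Finset (Fin m)) (a : Cl m) :
    ι (Qf m) (φ i) * (prodS φ A * a * reverse (prodS ψ A)) * ι (Qf m) (ψ j) =
      (mulSign i A * mulSign j A) • (prodS φ (A ∆ {i}) * a * reverse (prodS ψ (A ∆ {j}))) := by
  calc _ = ι (Qf m) (φ i) * prodS φ A * a * (reverse (prodS ψ A) * ι (Qf m) (ψ j)) := by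
          simp only [mul_assoc]
    _ = _ := by
      rw [hφ.ι_mul_prodS, hψ.reverse_prodS_mul_ι, smul_mul_assoc, smul_mul_assoc, mul_smul_comm,
        smul_smul]

variable (φ ψ) in
def psiSum (S : Finset (Finset (Fin m))) (a : Cl m) : Cl m :=
  ∑ A ∈ S, prodS φ A * a * reverse (prodS ψ A)

theorem psiSum_sum {κ : Type*} (S : Finset (Finset (Fin m))) (s : Finset κ) (a : κ → Cl m) :
    psiSum φ ψ S (∑ k ∈ s, a k) = ∑ k ∈ s, psiSum φ ψ S (a k) := by
  simp only [psiSum, Finset.mul_sum, Finset.sum_mul]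
  exact Finset.sum_comm

theorem ι_mul_psiSum_mul_ι_self (hφ : IsStructuralSet φ) (hψ : IsStructuralSet ψ) (i : Fin m)
    {S T : Finset (Finset (Fin m))} (hST : ∀ A, A ∈ T ↔ A ∆ {i} ∈ S) (a : Cl m) :
    ι (Qf m) (φ i) * psiSum φ ψ S a * ι (Qf m) (ψ i) = psiSum φ ψ T a := by
  simp only [psiSum, Finset.mul_sum, Finset.sum_mul, ι_mul_prodS_mul_reverse_mul_ι hφ hψ,
    mulSign_mul_self, one_smul]
  refine Finset.sum_nbij' (· ∆ {i}) (· ∆ {i})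
    (fun A hA => (hST _).2 (by rwa [symmDiff_symmDiff_cancel_right])) (fun B hB => (hST B).1 hB)
    (fun A _ => symmDiff_symmDiff_cancel_right _ _) (fun B _ => symmDiff_symmDiff_cancel_right _ _)
    (fun A _ => rfl)

theorem ι_mul_psiSum_mul_ι_swap (hφ : IsStructuralSet φ) (hψ : IsStructuralSet ψ) {i j : Fin m}
    (hij : i ≠ j) {S : Finset (Finset (Fin m))} (hS : ∀ A ∈ S, A ∆ {i, j} ∈ S) (a : Cl m) :
    ι (Qf m) (φ i) * psiSum φ ψ S a * ι (Qf m) (ψ j) +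
      ι (Qf m) (φ j) * psiSum φ ψ S a * ι (Qf m) (ψ i) = 0 := by
  have hi : ∀ A : Finset (Fin m), A ∆ {i, j} ∆ {i} = A ∆ {j} := fun A => by
    rw [Finset.pair_comm, symmDiff_assoc, Finset.pair_symmDiff_singleton_right hij.symm]
  have hj : ∀ A : Finset (Fin m), A ∆ {i, j} ∆ {j} = A ∆ {i} := fun A => by
    rw [symmDiff_assoc, Finset.pair_symmDiff_singleton_right hij]
  have hreindex : ∑ A ∈ S, ι (Qf m) (φ j) * (prodS φ A * a * reverse (prodS ψ A)) *
      ι (Qf m) (ψ i) = ∑ A ∈ S, ι (Qf m) (φ j) * (prodS φ (A ∆ {i, j}) * a *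
        reverse (prodS ψ (A ∆ {i, j}))) * ι (Qf m) (ψ i) :=
    Finset.sum_nbij' (· ∆ {i, j}) (· ∆ {i, j}) hS hS
      (fun A _ => symmDiff_symmDiff_cancel_right _ _)
      (fun A _ => symmDiff_symmDiff_cancel_right _ _)
      (fun A _ => by rw [symmDiff_symmDiff_cancel_right])
  simp only [psiSum, Finset.mul_sum, Finset.sum_mul]
  rw [hreindex, ← Finset.sum_add_distrib]
  refine Finset.sum_eq_zero fun A _ => ?_
  rw [ι_mul_prodS_mul_reverse_mul_ι hφ hψ, ι_mul_prodS_mul_reverse_mul_ι hφ hψ, hi, hj,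
    mul_comm (mulSign j _), mulSign_symmDiff_pair hij, neg_smul, add_neg_cancel]

theorem sum_sum_ι_mul_psiSum_mul_ι (hφ : IsStructuralSet φ) (hψ : IsStructuralSet ψ)
    {S T : Finset (Finset (Fin m))} (hS : ∀ i j, i ≠ j → ∀ A ∈ S, A ∆ {i, j} ∈ S)
    (hST : ∀ i A, A ∈ T ↔ A ∆ {i} ∈ S) (a : Fin m → Fin m → Cl m) (ha : ∀ i j, a i j = a j i) :
    ∑ i, ∑ j, ι (Qf m) (φ i) * psiSum φ ψ S (a i j) * ι (Qf m) (ψ j) =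
      psiSum φ ψ T (∑ i, a i i) := by
  rw [Finset.sum_sum_eq_sum_diag_of_antisymm, psiSum_sum]
  · exact Finset.sum_congr rfl fun i _ => ι_mul_psiSum_mul_ι_self hφ hψ i (hST i) _
  · intro i _ j _ hij
    rw [ha j i]
    exact ι_mul_psiSum_mul_ι_swap hφ hψ hij (hS i j hij) _

variable (φ ψ) in
theorem sum_psiK_eq_psiSum (p : ℕ → Prop) [DecidablePred p] (a : Cl m) :
    ∑ k ∈ (Finset.range (m + 1)).filter p, PsiK φ ψ k a = psiSum φ ψ {A | p #A} a := by
  rw [psiSum, ← Finset.sum_fiberwise_of_maps_to (g := Finset.card)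
    (t := (Finset.range (m + 1)).filter p)]
  · refine Finset.sum_congr rfl fun k hk => Finset.sum_congr ?_ fun _ _ => rfl
    rw [Finset.filter_filter]
    exact Finset.filter_congr fun A _ => by
      rw [and_iff_right_of_imp fun hA => hA ▸ (Finset.mem_filter.1 hk).2]
  · intro A hA
    refine Finset.mem_filter.2 ⟨?_, (Finset.mem_filter.1 hA).2⟩
    simpa [Nat.lt_succ_iff] using Finset.card_le_univ A

theorem PsiPlus_eq_psiSum (a : Cl m) : PsiPlus φ ψ a = psiSum φ ψ {A | Even #A} a :=
  sum_psiK_eq_psiSum φ ψ Even a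

theorem PsiMinus_eq_psiSum (a : Cl m) : PsiMinus φ ψ a = psiSum φ ψ {A | Odd #A} a :=
  sum_psiK_eq_psiSum φ ψ Odd a

theorem even_card_symmDiff_pair_iff {i j : Fin m} (h : i ≠ j) (A : Finset (Fin m)) :
    Even #(A ∆ {i, j}) ↔ Even #A := by
  simp [Finset.even_card_symmDiff_iff, Finset.card_pair h]

theorem even_card_symmDiff_singleton_iff (i : Fin m) (A : Finset (Fin m)) :
    Even #(A ∆ {i}) ↔ ¬Even #A := by
  simp [Finset.even_card_symmDiff_iff]

end Clifford

theorem pd_pd_comm {m : ℕ} {Ω : Set (Fin m → ℝ)} (hΩ : IsOpen Ω) {F : (Fin m → ℝ) → Coef m}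
    (hF : ContDiffOn ℝ 2 F Ω) {x : Fin m → ℝ} (hx : x ∈ Ω) (i j : Fin m) :
    pd i (pd j F) x = pd j (pd i F) x := by
  have hFx : ContDiffAt ℝ 2 F x := hF.contDiffAt (hΩ.mem_nhds hx)
  have hdiff : DifferentiableAt ℝ (fderiv ℝ F) x :=
    (hFx.fderiv_right (m := 1) (by norm_num)).differentiableAt one_ne_zero
  have hpd : ∀ v w : Fin m → ℝ,
      fderiv ℝ (fun y => fderiv ℝ F y v) x w = fderiv ℝ (fderiv ℝ F) x w v := fun v w => by
    rw [fderiv_clm_apply hdiff (differentiableAt_const v)]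
    simp
  exact (hpd _ _).trans <| ((hFx.isSymmSndFDerivAt (by simp)) _ _).trans (hpd _ _).symm

theorem sandwich_psiPlusMinus_general {m : ℕ} (φ ψ : Fin m → (Fin m → ℝ))
    (hφ : IsStructuralSet φ) (hψ : IsStructuralSet ψ)
    (Ω : Set (Fin m → ℝ)) (hΩo : IsOpen Ω)
    (F : (Fin m → ℝ) → Coef m) (hF : ContDiffOn ℝ 2 F Ω) :
    (∀ x ∈ Ω,
      (∑ i, ∑ j, ι (Qf m) (φ i) * PsiPlus φ ψ (toCl (pd i (pd j F) x)) * ι (Qf m) (ψ j))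
        = PsiMinus φ ψ (lapD F x)) ∧
    (∀ x ∈ Ω,
      (∑ i, ∑ j, ι (Qf m) (φ i) * PsiMinus φ ψ (toCl (pd i (pd j F) x)) * ι (Qf m) (ψ j))
        = PsiPlus φ ψ (lapD F x)) := by
  have hsymm : ∀ x ∈ Ω, ∀ i j, toCl (pd i (pd j F) x) = toCl (pd j (pd i F) x) :=
    fun x hx i j => by rw [pd_pd_comm hΩo hF hx]
  refine ⟨fun x hx => ?_, fun x hx => ?_⟩ <;>
  · simp only [PsiPlus_eq_psiSum, PsiMinus_eq_psiSum]
    refine sum_sum_ι_mul_psiSum_mul_ι hφ hψ ?_ ?_ _ (hsymm x hx) <;>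
    simp +contextual [← Nat.not_even_iff_odd, even_card_symmDiff_pair_iff,
      even_card_symmDiff_singleton_iff]

/-- for C²-smooth `f : Ω → ℝ_{0,m}`,
`φ∂[Ψ₊^{φ,ψ}(f)]ψ∂ = Ψ₋^{φ,ψ}(Δf)` and `φ∂[Ψ₋^{φ,ψ}(f)]ψ∂ = Ψ₊^{φ,ψ}(Δf)`.
(By linearity of `Ψ_±`, the left-hand sides are `Σᵢⱼ φⁱ Ψ_±(∂²f/∂xᵢ∂xⱼ) ψʲ`.) -/
theorem sandwich_psiPlusMinus {m : ℕ} (φ ψ : Fin m → (Fin m → ℝ))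
    (hφ : IsStructuralSet φ) (hψ : IsStructuralSet ψ)
    (Ω : Set (Fin m → ℝ)) (hΩo : IsOpen Ω) (hΩc : IsConnected Ω)
    (F : (Fin m → ℝ) → Coef m) (hF : ContDiffOn ℝ 2 F Ω) :
    (∀ x ∈ Ω,
      (∑ i, ∑ j, ι (Qf m) (φ i) * PsiPlus φ ψ (toCl (pd i (pd j F) x)) * ι (Qf m) (ψ j))
        = PsiMinus φ ψ (lapD F x)) ∧
    (∀ x ∈ Ω,
      (∑ i, ∑ j, ι (Qf m) (φ i) * PsiMinus φ ψ (toCl (pd i (pd j F) x)) * ι (Qf m) (ψ j))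
        = PsiPlus φ ψ (lapD F x)) :=
  sandwich_psiPlusMinus_general φ ψ hφ hψ Ω hΩo F hF
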